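/- arXiv:2509.17710 — 4 statements merged into one kernel-verified Lean document; each statement's English description precedes it below -/
import Mathlib

section
/- Adjusted Generalized Gronwall Lemma (Proposition 3.1 of the paper, in the pointwise form established by its proof): Let T > 0. Suppose y₁ : [0,T] → ℝ is continuous and nonnegative, y₂ : [0,T] → ℝ is integrable and nonnegative, a : [0,T] → ℝ is integrable and nonnegative, and let A ≥ 0, B > 0, β > 0 be real numbers such that for all T' ∈ [0,T] one has y₁(T') + ∫₀^{T'} y₂(t) dt ≤ A + ∫₀^{T'} a(t)·y₁(t) dt + B·(sup_{t∈[0,T']} y₁(t))^β·∫₀^{T'} y₁(t) dt. Set E := exp(∫₀^T a(t) dt) and suppose there exists δ > 1 such that δ·A·E < ((δ−1)/(δ·B·T·E))^{1/β}. Then for every T' ∈ [0,T] one has y₁(T') + ∫₀^{T'} y₂(t) dt ≤ δ·A·E. -/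
/-!
Fix `K` strictly between `δ A E` and `((δ - 1) / (δ B T E)) ^ (1 / β)`. While `y₁ ≤ K` on
`[0, t]`, the superlinear term is at most `B K ^ β ∫ y₁`, so `u = y₁ + ∫ y₂` satisfies a linear
integral inequality with coefficient `a + B K ^ β`, and Gronwall's inequality gives
`u t ≤ A E exp (B K ^ β T) < δ A E < K`, because `B K ^ β T < 1 - 1 / δ ≤ log δ`.
Hence the continuous function `y₁` can never reach the level `K` on `[0, T]`.

Gronwall's inequality is needed for a merely integrable coefficient; it follows from the
fundamental theorem of calculus for absolutely continuous functions.
-/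

open MeasureTheory intervalIntegral Set Filter Real
open scoped NNReal

theorem LipschitzOnWith.comp_absolutelyContinuousOnInterval {X Y : Type*} [PseudoMetricSpace X]
    [PseudoMetricSpace Y] {f : ℝ → X} {g : X → Y} {K : ℝ≥0} {a b : ℝ}
    (hg : LipschitzOnWith K g (f '' uIcc a b)) (hf : AbsolutelyContinuousOnInterval f a b) :
    AbsolutelyContinuousOnInterval (g ∘ f) a b := by
  unfold AbsolutelyContinuousOnInterval at hf ⊢
  refine squeeze_zero' (Eventually.of_forall fun _ ↦ Finset.sum_nonneg fun _ _ ↦ dist_nonneg) ?_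
    (by simpa using hf.const_mul (K : ℝ))
  rw [eventually_inf_principal]
  filter_upwards with ⟨n, I⟩ hI
  rw [Finset.mul_sum]
  gcongr with i hi
  exact hg.dist_le_mul _ (mem_image_of_mem f (hI.1 i hi).1) _ (mem_image_of_mem f (hI.1 i hi).2)

theorem Real.lipschitzOnWith_exp_Iic_zero : LipschitzOnWith 1 exp (Iic 0) :=
  (convex_Iic 0).lipschitzOnWith_of_nnnorm_deriv_le (fun _ _ ↦ differentiableAt_exp) fun x hx ↦ by
    rw [Real.deriv_exp, ← NNReal.coe_le_coe, coe_nnnorm, norm_of_nonneg (exp_pos x).le]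
    simpa using hx

theorem le_mul_exp_integral_of_le_add_integral_mul {u c : ℝ → ℝ} {a b C : ℝ}
    (hc : IntervalIntegrable c volume a b) (hc_nonneg : ∀ t ∈ Icc a b, 0 ≤ c t)
    (hcu : IntervalIntegrable (fun t ↦ c t * u t) volume a b)
    (h : ∀ t ∈ Icc a b, u t ≤ C + ∫ s in a..t, c s * u s) :
    ∀ t ∈ Icc a b, u t ≤ C * exp (∫ s in a..t, c s) := by
  intro t ht
  have hsub : uIcc a t ⊆ uIcc a b := uIcc_subset_uIcc_left (Icc_subset_uIcc ht)
  have hc' := hc.mono_set hsub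
  have hcu' := hcu.mono_set hsub
  set P : ℝ → ℝ := fun x ↦ ∫ s in a..x, c s
  set R : ℝ → ℝ := fun x ↦ ∫ s in a..x, c s * u s
  -- `Q = exp (-P) * (C + R)` is absolutely continuous with `Q' = exp (-P) * c * (u - (C + R)) ≤ 0`.
  set Q : ℝ → ℝ := fun x ↦ exp (-P x) * (C + R x)
  have hP_nonneg : ∀ x ∈ uIcc a t, 0 ≤ P x := by
    rw [uIcc_of_le ht.1]
    exact fun x hx ↦
      integral_nonneg hx.1 fun s hs ↦ hc_nonneg s ⟨hs.1, hs.2.trans (hx.2.trans ht.2)⟩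
  have hQ : AbsolutelyContinuousOnInterval Q a t := by
    have hexp : LipschitzOnWith 1 exp ((fun x ↦ -P x) '' uIcc a t) :=
      lipschitzOnWith_exp_Iic_zero.mono <| by
        rintro _ ⟨x, hx, rfl⟩
        exact neg_nonpos.2 (hP_nonneg x hx)
    have hR : AbsolutelyContinuousOnInterval (fun x ↦ C + R x) a t :=
      (LipschitzWith.const C).lipschitzOnWith.absolutelyContinuousOnInterval.add
        (hcu'.absolutelyContinuousOnInterval_intervalIntegral left_mem_uIcc)
    exact (hexp.comp_absolutelyContinuousOnInterval
      (hc'.absolutelyContinuousOnInterval_intervalIntegral left_mem_uIcc).neg).mul hR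
  have hQ' : ∀ᵐ x, x ∈ Icc a t → deriv Q x ≤ 0 := by
    filter_upwards [hc'.ae_hasDerivAt_integral, hcu'.ae_hasDerivAt_integral] with x hP hR hx
    have hx' : x ∈ uIcc a t := Icc_subset_uIcc hx
    have hxb : x ∈ Icc a b := ⟨hx.1, hx.2.trans ht.2⟩
    have hQd : HasDerivAt Q (exp (-P x) * -c x * (C + R x) + exp (-P x) * (c x * u x)) x :=
      (hP hx' a left_mem_uIcc).neg.exp.mul ((hR hx' a left_mem_uIcc).const_add C)
    calc deriv Q x = exp (-P x) * c x * (u x - (C + R x)) := by rw [hQd.deriv]; ring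
      _ ≤ 0 := mul_nonpos_of_nonneg_of_nonpos (mul_nonneg (exp_pos _).le (hc_nonneg x hxb))
          (sub_nonpos.2 (h x hxb))
  have hQ_le : Q t ≤ Q a := by
    have : ∫ x in a..t, deriv Q x ≤ ∫ _ in a..t, (0 : ℝ) :=
      integral_mono_ae_restrict ht.1 hQ.intervalIntegrable_deriv intervalIntegrable_const
        ((ae_restrict_iff' measurableSet_Icc).2 hQ')
    rw [hQ.integral_deriv_eq_sub, intervalIntegral.integral_zero] at this
    linarith
  calc u t ≤ C + R t := h t ht
    _ = exp (P t) * Q t := by simp [Q, ← mul_assoc, ← exp_add]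
    _ ≤ exp (P t) * Q a := by gcongr
    _ = C * exp (P t) := by simp [Q, P, R, mul_comm]

theorem ContinuousOn.forall_lt_of_forall_le_imp_lt {f : ℝ → ℝ} {a b K : ℝ}
    (hf : ContinuousOn f (Icc a b)) (ha : f a ≤ K)
    (hstep : ∀ t ∈ Icc a b, (∀ s ∈ Icc a t, f s ≤ K) → f t < K) :
    ∀ t ∈ Icc a b, f t < K := by
  by_contra! ⟨t₀, ht₀, hKt₀⟩
  -- `τ` is the first time at which `f` reaches `K`.
  set F := Icc a b ∩ f ⁻¹' Ici K
  have hF_bdd : BddBelow F := ⟨a, fun x hx ↦ hx.1.1⟩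
  have hτ : sInf F ∈ F := (hf.preimage_isClosed_of_isClosed isClosed_Icc isClosed_Ici).csInf_mem
    ⟨t₀, ht₀, hKt₀⟩ hF_bdd
  set τ := sInf F
  have hτb : Icc a τ ⊆ Icc a b := Icc_subset_Icc_right hτ.1.2
  have hlt : ∀ s ∈ Ico a τ, f s ≤ K := fun s hs ↦
    le_of_not_ge fun hKs ↦ (csInf_le hF_bdd ⟨hτb (Ico_subset_Icc_self hs), hKs⟩).not_gt hs.2
  have hle : ∀ s ∈ Icc a τ, f s ≤ K := by
    rcases hτ.1.1.eq_or_lt with hτa | hτa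
    · intro s hs
      rwa [le_antisymm (hs.2.trans hτa.ge) hs.1]
    · have hG : IsClosed (Icc a τ ∩ f ⁻¹' Iic K) :=
        (hf.mono hτb).preimage_isClosed_of_isClosed isClosed_Icc isClosed_Iic
      have hsub : Ico a τ ⊆ Icc a τ ∩ f ⁻¹' Iic K := fun s hs ↦ ⟨Ico_subset_Icc_self hs, hlt s hs⟩
      rw [← closure_Ico hτa.ne]
      exact fun s hs ↦ (closure_minimal hsub hG hs).2
  exact (hstep τ hτ.1 hle).not_ge hτ.2

theorem le_add_integral_mul_of_le_add_sSup_rpow_mul_integral {y u a : ℝ → ℝ} {s A B β K : ℝ}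
    (hs : 0 ≤ s) (hyc : ContinuousOn y (Icc 0 s)) (hy_nonneg : ∀ r ∈ Icc 0 s, 0 ≤ y r)
    (huc : ContinuousOn u (Icc 0 s)) (hyu : ∀ r ∈ Icc 0 s, y r ≤ u r)
    (ha : IntervalIntegrable a volume 0 s) (ha_nonneg : ∀ r ∈ Icc 0 s, 0 ≤ a r)
    (hB : 0 ≤ B) (hβ : 0 ≤ β) (hyK : ∀ r ∈ Icc 0 s, y r ≤ K)
    (h : u s ≤ A + (∫ r in 0..s, a r * y r) + B * sSup (y '' Icc 0 s) ^ β * ∫ r in 0..s, y r) :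
    u s ≤ A + ∫ r in 0..s, (a r + B * K ^ β) * u r := by
  have hyi : IntervalIntegrable y volume 0 s := hyc.intervalIntegrable_of_Icc hs
  have hui : IntervalIntegrable u volume 0 s := huc.intervalIntegrable_of_Icc hs
  have haui : IntervalIntegrable (fun r ↦ a r * u r) volume 0 s :=
    ha.mul_continuousOn (uIcc_of_le hs ▸ huc)
  have hsup : sSup (y '' Icc 0 s) ≤ K :=
    csSup_le ((nonempty_Icc.2 hs).image y) (forall_mem_image.2 hyK)
  have hsup_nonneg : 0 ≤ sSup (y '' Icc 0 s) := Real.sSup_nonneg (forall_mem_image.2 hy_nonneg)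
  have hK : 0 ≤ K := hsup_nonneg.trans hsup
  have hay_le : ∫ r in 0..s, a r * y r ≤ ∫ r in 0..s, a r * u r :=
    integral_mono_on hs (ha.mul_continuousOn (uIcc_of_le hs ▸ hyc)) haui fun r hr ↦
      mul_le_mul_of_nonneg_left (hyu r hr) (ha_nonneg r hr)
  have hy_le : ∫ r in 0..s, y r ≤ ∫ r in 0..s, u r := integral_mono_on hs hyi hui hyu
  have hy_int_nonneg : 0 ≤ ∫ r in 0..s, y r := integral_nonneg hs hy_nonneg
  calc u s ≤ A + (∫ r in 0..s, a r * y r) + B * sSup (y '' Icc 0 s) ^ β * ∫ r in 0..s, y r := h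
    _ ≤ A + (∫ r in 0..s, a r * u r) + B * K ^ β * ∫ r in 0..s, u r := by gcongr
    _ = A + ∫ r in 0..s, (a r + B * K ^ β) * u r := by
        simp_rw [add_mul]
        rw [integral_add haui (hui.const_mul _), intervalIntegral.integral_const_mul, add_assoc]

theorem le_mul_exp_of_le_add_sSup_rpow_mul_integral {y u a : ℝ → ℝ} {T t A B β K : ℝ}
    (ht : t ∈ Icc 0 T) (hyc : ContinuousOn y (Icc 0 T)) (hy_nonneg : ∀ s ∈ Icc 0 T, 0 ≤ y s)
    (huc : ContinuousOn u (Icc 0 T)) (hyu : ∀ s ∈ Icc 0 T, y s ≤ u s)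
    (ha : IntervalIntegrable a volume 0 T) (ha_nonneg : ∀ s ∈ Icc 0 T, 0 ≤ a s)
    (hA : 0 ≤ A) (hB : 0 ≤ B) (hβ : 0 ≤ β) (hyK : ∀ s ∈ Icc 0 t, y s ≤ K)
    (h : ∀ s ∈ Icc 0 T, u s ≤
      A + (∫ r in 0..s, a r * y r) + B * sSup (y '' Icc 0 s) ^ β * ∫ r in 0..s, y r) :
    u t ≤ A * exp ((∫ r in 0..T, a r) + B * K ^ β * T) := by
  have hsub : ∀ {s}, s ∈ Icc 0 t → Icc 0 s ⊆ Icc 0 T := fun hs ↦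
    Icc_subset_Icc_right (hs.2.trans ht.2)
  have hsub_uIcc : ∀ {s}, s ∈ Icc 0 t → uIcc 0 s ⊆ uIcc 0 T := fun hs ↦ by
    simpa only [uIcc_of_le hs.1, uIcc_of_le (ht.1.trans ht.2)] using hsub hs
  have hlin : ∀ s ∈ Icc 0 t, u s ≤ A + ∫ r in 0..s, (a r + B * K ^ β) * u r := fun s hs ↦
    le_add_integral_mul_of_le_add_sSup_rpow_mul_integral hs.1 (hyc.mono (hsub hs))
      (fun r hr ↦ hy_nonneg r (hsub hs hr)) (huc.mono (hsub hs)) (fun r hr ↦ hyu r (hsub hs hr))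
      (ha.mono_set (hsub_uIcc hs)) (fun r hr ↦ ha_nonneg r (hsub hs hr)) hB hβ
      (fun r hr ↦ hyK r ⟨hr.1, hr.2.trans hs.2⟩) (h s (hsub hs ⟨hs.1, le_rfl⟩))
  have hK : 0 ≤ K := (hy_nonneg 0 ⟨le_rfl, ht.1.trans ht.2⟩).trans (hyK 0 ⟨le_rfl, ht.1⟩)
  have hat : IntervalIntegrable a volume 0 t := ha.mono_set (hsub_uIcc ⟨ht.1, le_rfl⟩)
  have hc : IntervalIntegrable (fun r ↦ a r + B * K ^ β) volume 0 t :=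
    hat.add intervalIntegrable_const
  have hgr := le_mul_exp_integral_of_le_add_integral_mul hc
    (fun s hs ↦ add_nonneg (ha_nonneg s (hsub ⟨ht.1, le_rfl⟩ hs)) (by positivity))
    (hc.mul_continuousOn (uIcc_of_le ht.1 ▸ huc.mono (hsub ⟨ht.1, le_rfl⟩)))
    hlin t ⟨ht.1, le_rfl⟩
  rw [integral_add hat intervalIntegrable_const, intervalIntegral.integral_const, smul_eq_mul,
    sub_zero, mul_comm t] at hgr
  have hat_le : ∫ r in 0..t, a r ≤ ∫ r in 0..T, a r :=
    integral_mono_interval le_rfl ht.1 ht.2 ((ae_restrict_iff' measurableSet_Ioc).2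
      (Eventually.of_forall fun r hr ↦ ha_nonneg r (Ioc_subset_Icc_self hr))) ha
  refine hgr.trans ?_
  gcongr
  exact ht.2

theorem exp_mul_rpow_mul_lt_of_lt_rpow {B T E β δ K : ℝ} (hB : 0 < B) (hT : 0 < T) (hE : 1 ≤ E)
    (hβ : 0 < β) (hδ : 1 < δ) (hK : 0 ≤ K) (hKlt : K < ((δ - 1) / (δ * B * T * E)) ^ (1 / β)) :
    exp (B * K ^ β * T) < δ := by
  have hδ0 : 0 < δ := zero_lt_one.trans hδ
  have hR : 0 < (δ - 1) / (δ * B * T * E) := div_pos (sub_pos.2 hδ) (by positivity)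
  have hKβ : K ^ β < (δ - 1) / (δ * B * T * E) := by
    simpa [← rpow_mul hR.le, hβ.ne'] using rpow_lt_rpow hK hKlt hβ
  have hlog : B * K ^ β * T < log δ :=
    calc B * K ^ β * T < B * T * ((δ - 1) / (δ * B * T * E)) := by nlinarith [mul_pos hB hT]
      _ = (δ - 1) / δ / E := by field_simp
      _ ≤ (δ - 1) / δ := div_le_self (div_nonneg (sub_pos.2 hδ).le hδ0.le) hE
      _ = 1 - δ⁻¹ := by field_simp
      _ ≤ log δ := one_sub_inv_le_log_of_pos hδ0
  simpa [exp_log hδ0] using exp_lt_exp.2 hlog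

/-- Adjusted Generalized Gronwall Lemma (Proposition 3.1, pointwise form). -/
theorem adjusted_generalized_gronwall
    (T : ℝ) (hT : 0 < T)
    (y₁ y₂ a : ℝ → ℝ)
    (hy₁c : ContinuousOn y₁ (Icc 0 T))
    (hy₁nn : ∀ t ∈ Icc (0:ℝ) T, 0 ≤ y₁ t)
    (hy₂i : IntervalIntegrable y₂ volume 0 T)
    (hy₂nn : ∀ t ∈ Icc (0:ℝ) T, 0 ≤ y₂ t)
    (hai : IntervalIntegrable a volume 0 T)
    (hann : ∀ t ∈ Icc (0:ℝ) T, 0 ≤ a t)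
    (A B β : ℝ) (hA : 0 ≤ A) (hB : 0 < B) (hβ : 0 < β)
    (hmain : ∀ T' ∈ Icc (0:ℝ) T,
      y₁ T' + ∫ t in (0:ℝ)..T', y₂ t ≤
        A + (∫ t in (0:ℝ)..T', a t * y₁ t)
          + B * (sSup (y₁ '' Icc 0 T')) ^ β * ∫ t in (0:ℝ)..T', y₁ t)
    (E : ℝ) (hE : E = Real.exp (∫ t in (0:ℝ)..T, a t))
    (δ : ℝ) (hδ : 1 < δ)
    (hcond : δ * A * E < ((δ - 1) / (δ * B * T * E)) ^ (1 / β)) :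
    ∀ T' ∈ Icc (0:ℝ) T, y₁ T' + ∫ t in (0:ℝ)..T', y₂ t ≤ δ * A * E := by
  set u : ℝ → ℝ := fun s ↦ y₁ s + ∫ t in (0:ℝ)..s, y₂ t
  have huc : ContinuousOn u (Icc 0 T) :=
    hy₁c.add (uIcc_of_le hT.le ▸ continuousOn_primitive_interval' hy₂i left_mem_uIcc)
  have hy₁u : ∀ s ∈ Icc 0 T, y₁ s ≤ u s := fun s hs ↦
    le_add_of_nonneg_right (integral_nonneg hs.1 fun r hr ↦ hy₂nn r ⟨hr.1, hr.2.trans hs.2⟩)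
  have hE1 : 1 ≤ E := hE ▸ one_le_exp (integral_nonneg hT.le hann)
  have hAE : A ≤ δ * A * E := by nlinarith [one_le_mul_of_one_le_of_one_le hδ.le hE1]
  obtain ⟨K, hAK, hK⟩ := exists_between hcond
  have hK0 : 0 ≤ K := hA.trans (hAE.trans hAK.le)
  have hexp := exp_mul_rpow_mul_lt_of_lt_rpow hB hT hE1 hβ hδ hK0 hK
  have hbound : ∀ t ∈ Icc 0 T, (∀ s ∈ Icc 0 t, y₁ s ≤ K) → u t ≤ δ * A * E := by
    intro t ht hyK
    calc u t ≤ A * exp ((∫ r in (0:ℝ)..T, a r) + B * K ^ β * T) :=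
          le_mul_exp_of_le_add_sSup_rpow_mul_integral ht hy₁c hy₁nn huc hy₁u hai hann hA hB.le
            hβ.le hyK hmain
      _ = A * E * exp (B * K ^ β * T) := by rw [hE, exp_add]; ring
      _ ≤ A * E * δ := mul_le_mul_of_nonneg_left hexp.le (mul_nonneg hA (zero_le_one.trans hE1))
      _ = δ * A * E := by ring
  have hy₀ : y₁ 0 ≤ A := by simpa using hmain 0 ⟨le_rfl, hT.le⟩
  have hy₁K : ∀ t ∈ Icc 0 T, y₁ t < K :=
    hy₁c.forall_lt_of_forall_le_imp_lt (hy₀.trans (hAE.trans hAK.le)) fun t ht hyK ↦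
      (hy₁u t ht).trans_lt ((hbound t ht hyK).trans_lt hAK)
  exact fun T' hT' ↦ hbound T' hT' fun s hs ↦ (hy₁K s ⟨hs.1, hs.2.trans hT'.2⟩).le
end

section
/- Degenerate case of the Adjusted Generalized Gronwall Lemma (A = 0): Let T > 0. Suppose y₁ : [0,T] → ℝ is continuous and nonnegative, y₂ : [0,T] → ℝ is integrable and nonnegative, a : [0,T] → ℝ is integrable and nonnegative, and let B ≥ 0, β > 0 be real numbers such that for all T' ∈ [0,T] one has y₁(T') + ∫₀^{T'} y₂(t) dt ≤ ∫₀^{T'} a(t)·y₁(t) dt + B·(sup_{t∈[0,T']} y₁(t))^β·∫₀^{T'} y₁(t) dt. Then y₁(t) = 0 for all t ∈ [0,T] and ∫₀^T y₂(t) dt = 0. -/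
/-!
Replacing the running supremum `sup_{[0,t]} y₁` by its value on all of `[0,T]` turns the hypothesis
into the linear inequality `y₁ t ≤ ∫₀ᵗ (a + C) y₁` with `C = B (sup_{[0,T]} y₁)^β`. For such an
inequality the primitive `F t = ∫₀ᵗ (a + C) y₁` is nondecreasing and dominates `y₁`, so on a short
interval `[x, t]` after a zero `x` of `F` we get `F t ≤ F t ∫ₓᵗ (a + C)` with the integral `< 1`;
hence the zero set of `F` is closed and open to the right in `[0,T]`, i.e. everything.
Then `y₁ = 0`, and the hypothesis at `T' = T` forces `∫₀ᵀ y₂ ≤ 0`.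
-/

open MeasureTheory intervalIntegral Set Filter Topology

section Gronwall

variable {a b : ℝ} {g y : ℝ → ℝ}

theorem monotoneOn_primitive_of_nonneg {f : ℝ → ℝ} (hf : IntervalIntegrable f volume a b)
    (hf0 : ∀ t ∈ Icc a b, 0 ≤ f t) :
    MonotoneOn (fun t => ∫ s in a..t, f s) (Icc a b) := by
  intro s hs t ht hst
  have hint : ∀ u ∈ Icc a b, IntervalIntegrable f volume a u := fun u hu =>
    hf.mono_set (uIcc_subset_uIcc_left (Icc_subset_uIcc hu))
  have hsplit := integral_interval_sub_left (hint t ht) (hint s hs)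
  have : 0 ≤ ∫ u in s..t, f u :=
    integral_nonneg hst fun u hu => hf0 u ⟨hs.1.trans hu.1, hu.2.trans ht.2⟩
  dsimp only
  linarith

/-- Holds because `y ≤ F ≤ F t` on `[x, t]`, where `F` is the nondecreasing primitive of `g * y`. -/
theorem primitive_le_mul_integral_of_le_primitive
    (hg : IntervalIntegrable g volume a b) (hg0 : ∀ t ∈ Icc a b, 0 ≤ g t)
    (hgy : IntervalIntegrable (fun s => g s * y s) volume a b)
    (hgy0 : ∀ t ∈ Icc a b, 0 ≤ g t * y t)
    (h : ∀ t ∈ Icc a b, y t ≤ ∫ s in a..t, g s * y s)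
    {x t : ℝ} (hx : x ∈ Icc a b) (hFx : ∫ s in a..x, g s * y s = 0) (ht : t ∈ Icc x b) :
    ∫ s in a..t, g s * y s ≤ (∫ s in x..t, g s) * ∫ s in a..t, g s * y s := by
  have hxt : Icc x t ⊆ Icc a b := Icc_subset_Icc hx.1 ht.2
  have hta : t ∈ Icc a b := hxt (right_mem_Icc.2 ht.1)
  have hsub : uIcc x t ⊆ uIcc a b := by
    rw [uIcc_of_le ht.1]; exact hxt.trans Icc_subset_uIcc
  have hmono := monotoneOn_primitive_of_nonneg hgy hgy0
  calc ∫ s in a..t, g s * y s = ∫ s in x..t, g s * y s := by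
        rw [← integral_interval_sub_left (hgy.mono_set (uIcc_subset_uIcc_left (Icc_subset_uIcc hta)))
          (hgy.mono_set (uIcc_subset_uIcc_left (Icc_subset_uIcc hx))), hFx, sub_zero]
    _ ≤ ∫ s in x..t, g s * ∫ r in a..t, g r * y r := by
        refine integral_mono_on ht.1 (hgy.mono_set hsub) ((hg.mono_set hsub).mul_const _) ?_
        intro s hs
        exact mul_le_mul_of_nonneg_left ((h s (hxt hs)).trans (hmono (hxt hs) hta hs.2))
          (hg0 s (hxt hs))
    _ = (∫ s in x..t, g s) * ∫ s in a..t, g s * y s := integral_mul_const _ _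

theorem eqOn_zero_of_le_integral_mul (hyc : ContinuousOn y (Icc a b))
    (hy0 : ∀ t ∈ Icc a b, 0 ≤ y t) (hg : IntervalIntegrable g volume a b)
    (hg0 : ∀ t ∈ Icc a b, 0 ≤ g t) (h : ∀ t ∈ Icc a b, y t ≤ ∫ s in a..t, g s * y s) :
    EqOn y 0 (Icc a b) := by
  intro t ht
  have hab : a ≤ b := ht.1.trans ht.2
  have hgy : IntervalIntegrable (fun s => g s * y s) volume a b :=
    hg.mul_continuousOn (by rwa [uIcc_of_le hab])
  have hgy0 : ∀ t ∈ Icc a b, 0 ≤ g t * y t := fun t ht => mul_nonneg (hg0 t ht) (hy0 t ht)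
  set F : ℝ → ℝ := fun t => ∫ s in a..t, g s * y s
  have hFc : ContinuousOn F (Icc a b) := by
    rw [← uIcc_of_le hab]; exact continuousOn_primitive_interval' hgy left_mem_uIcc
  have hF0 : ∀ t ∈ Icc a b, 0 ≤ F t := fun t ht =>
    integral_nonneg ht.1 fun s hs => hgy0 s ⟨hs.1, hs.2.trans ht.2⟩
  have hzero : Icc a b ⊆ {t | F t = 0} := by
    refine IsClosed.Icc_subset_of_forall_mem_nhdsWithin ?_ integral_same ?_
    · rw [inter_comm]; exact hFc.preimage_isClosed_of_isClosed isClosed_Icc isClosed_singleton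
    rintro x ⟨hFx, hx⟩
    have hIcc : Icc a b ∈ 𝓝[>] x :=
      mem_of_superset (Icc_mem_nhdsGT hx.2) (Icc_subset_Icc_left hx.1)
    have hG : ContinuousWithinAt (fun t => ∫ s in x..t, g s) (Icc a b) x := by
      have hx' : x ∈ uIcc a b := Icc_subset_uIcc (Ico_subset_Icc_self hx)
      rw [← uIcc_of_le hab]
      exact continuousOn_primitive_interval' hg hx' x hx'
    have hsmall : ∀ᶠ t in 𝓝[>] x, ∫ s in x..t, g s < 1 :=
      (hG.mono_of_mem_nhdsWithin hIcc).tendsto.eventually_lt_const (by simp)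
    filter_upwards [hsmall, Icc_mem_nhdsGT hx.2] with t hGt ht
    have := primitive_le_mul_integral_of_le_primitive hg hg0 hgy hgy0 h
      (Ico_subset_Icc_self hx) hFx ht
    nlinarith [hF0 t ⟨hx.1.trans ht.1, ht.2⟩]
  exact le_antisymm ((h t ht).trans_eq (hzero ht)) (hy0 t ht)

end Gronwall

theorem rpow_sSup_image_Icc_le {y : ℝ → ℝ} {a b t β : ℝ} (hyc : ContinuousOn y (Icc a b))
    (hya : 0 ≤ y a) (hβ : 0 ≤ β) (ht : t ∈ Icc a b) :
    sSup (y '' Icc a t) ^ β ≤ sSup (y '' Icc a b) ^ β := by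
  have hsub : Icc a t ⊆ Icc a b := Icc_subset_Icc_right ht.2
  refine Real.rpow_le_rpow (hya.trans ((hyc.mono hsub).le_sSup_image_Icc (left_mem_Icc.2 ht.1)))
    (csSup_le_csSup (isCompact_Icc.image_of_continuousOn hyc).bddAbove
      ((nonempty_Icc.2 ht.1).image y) (image_mono hsub)) hβ

theorem le_integral_add_const_mul_of_le_sSup_rpow_bound {y a : ℝ → ℝ} {T B β t : ℝ}
    (hyc : ContinuousOn y (Icc 0 T)) (hy0 : ∀ s ∈ Icc 0 T, 0 ≤ y s)
    (ha : IntervalIntegrable a volume 0 T) (hB : 0 ≤ B) (hβ : 0 ≤ β) (ht : t ∈ Icc 0 T)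
    (h : y t ≤ (∫ s in (0:ℝ)..t, a s * y s) + B * sSup (y '' Icc 0 t) ^ β * ∫ s in (0:ℝ)..t, y s) :
    y t ≤ ∫ s in (0:ℝ)..t, (a s + B * sSup (y '' Icc 0 T) ^ β) * y s := by
  have hsub : uIcc 0 t ⊆ Icc 0 T := by rw [uIcc_of_le ht.1]; exact Icc_subset_Icc_right ht.2
  have hyi : IntervalIntegrable y volume 0 t := (hyc.mono hsub).intervalIntegrable
  have hayi : IntervalIntegrable (fun s => a s * y s) volume 0 t :=
    (ha.mono_set (uIcc_subset_uIcc_left (Icc_subset_uIcc ht))).mul_continuousOn (hyc.mono hsub)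
  have hcoef : B * sSup (y '' Icc 0 t) ^ β * ∫ s in (0:ℝ)..t, y s ≤
      B * sSup (y '' Icc 0 T) ^ β * ∫ s in (0:ℝ)..t, y s :=
    mul_le_mul_of_nonneg_right (mul_le_mul_of_nonneg_left
      (rpow_sSup_image_Icc_le hyc (hy0 0 (left_mem_Icc.2 (ht.1.trans ht.2))) hβ ht) hB)
      (integral_nonneg ht.1 fun s hs => hy0 s (Icc_subset_Icc_right ht.2 hs))
  simp_rw [add_mul]
  rw [integral_add hayi (hyi.const_mul _), intervalIntegral.integral_const_mul]
  linarith

theorem adjusted_generalized_gronwall_degenerate_general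
    (T : ℝ) (hT : 0 < T)
    (y₁ y₂ a : ℝ → ℝ)
    (hy₁c : ContinuousOn y₁ (Icc 0 T))
    (hy₁nn : ∀ t ∈ Icc (0:ℝ) T, 0 ≤ y₁ t)
    (hy₂nn : ∀ t ∈ Icc (0:ℝ) T, 0 ≤ y₂ t)
    (hai : IntervalIntegrable a volume 0 T)
    (hann : ∀ t ∈ Icc (0:ℝ) T, 0 ≤ a t)
    (B β : ℝ) (hB : 0 ≤ B) (hβ : 0 < β)
    (hmain : ∀ T' ∈ Icc (0:ℝ) T,
      y₁ T' + ∫ t in (0:ℝ)..T', y₂ t ≤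
        (∫ t in (0:ℝ)..T', a t * y₁ t)
          + B * (sSup (y₁ '' Icc 0 T')) ^ β * ∫ t in (0:ℝ)..T', y₁ t) :
    (∀ t ∈ Icc (0:ℝ) T, y₁ t = 0) ∧ (∫ t in (0:ℝ)..T, y₂ t) = 0 := by
  have h0 : (0:ℝ) ∈ Icc 0 T := left_mem_Icc.2 hT.le
  have hT' : T ∈ Icc 0 T := right_mem_Icc.2 hT.le
  have hC : 0 ≤ B * sSup (y₁ '' Icc 0 T) ^ β :=
    mul_nonneg hB (Real.rpow_nonneg ((hy₁nn 0 h0).trans (hy₁c.le_sSup_image_Icc h0)) β)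
  have hy₁ : EqOn y₁ 0 (Icc 0 T) := by
    refine eqOn_zero_of_le_integral_mul hy₁c hy₁nn (hai.add intervalIntegrable_const)
      (fun t ht => add_nonneg (hann t ht) hC) fun t ht => ?_
    refine le_integral_add_const_mul_of_le_sSup_rpow_bound hy₁c hy₁nn hai hB hβ.le ht ?_
    have hy₂ : 0 ≤ ∫ s in (0:ℝ)..t, y₂ s :=
      integral_nonneg ht.1 fun s hs => hy₂nn s (Icc_subset_Icc_right ht.2 hs)
    linarith [hmain t ht]
  refine ⟨hy₁, le_antisymm ?_ (integral_nonneg hT.le hy₂nn)⟩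
  have hay₁ : EqOn (fun s => a s * y₁ s) 0 (uIcc 0 T) := fun s hs => by
    simp [hy₁ (uIcc_of_le hT.le ▸ hs)]
  have hT_bound := hmain T hT'
  rw [integral_congr hay₁, integral_congr (hy₁.mono (uIcc_of_le hT.le).subset), hy₁ hT']
    at hT_bound
  simpa using hT_bound

/-- Degenerate case (A = 0) of the Adjusted Generalized Gronwall Lemma. -/
theorem adjusted_generalized_gronwall_degenerate
    (T : ℝ) (hT : 0 < T)
    (y₁ y₂ a : ℝ → ℝ)
    (hy₁c : ContinuousOn y₁ (Icc 0 T))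
    (hy₁nn : ∀ t ∈ Icc (0:ℝ) T, 0 ≤ y₁ t)
    (hy₂i : IntervalIntegrable y₂ volume 0 T)
    (hy₂nn : ∀ t ∈ Icc (0:ℝ) T, 0 ≤ y₂ t)
    (hai : IntervalIntegrable a volume 0 T)
    (hann : ∀ t ∈ Icc (0:ℝ) T, 0 ≤ a t)
    (B β : ℝ) (hB : 0 ≤ B) (hβ : 0 < β)
    (hmain : ∀ T' ∈ Icc (0:ℝ) T,
      y₁ T' + ∫ t in (0:ℝ)..T', y₂ t ≤
        (∫ t in (0:ℝ)..T', a t * y₁ t)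
          + B * (sSup (y₁ '' Icc 0 T')) ^ β * ∫ t in (0:ℝ)..T', y₁ t) :
    (∀ t ∈ Icc (0:ℝ) T, y₁ t = 0) ∧ (∫ t in (0:ℝ)..T, y₂ t) = 0 :=
  adjusted_generalized_gronwall_degenerate_general T hT y₁ y₂ a hy₁c hy₁nn hy₂nn hai hann B β hB hβ
    hmain
end

section
/- Local-in-time continuation lemma (analytic core of Section 3.2 / Theorem 3.5): Let s < s' be real numbers and set Δ := s' − s. Let y₁ : [s,s'] → ℝ be continuous and nonnegative, let y₂ : [s,s'] → ℝ be integrable and nonnegative, and let A ≥ 0, E ≥ 1, B ≥ 0 be real numbers such that for all t ∈ [s,s'] one has y₁(t) + ∫ₛᵗ y₂(r) dr ≤ A·E·exp(B·∫ₛᵗ y₁(r)² dr). If there exists δ > 1 such that exp(B·Δ·δ²·A²·E²) < δ, then for all t ∈ [s,s'] one has y₁(t) + ∫ₛᵗ y₂(r) dr ≤ δ·A·E. -/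
/-!
A continuity (bootstrap) argument. Put `F t = y₁ t + ∫ₛᵗ y₂` and `K = δ A E`. As long as `F < K`
on `[s, t)`, also `0 ≤ y₁ < K` there, so `∫ₛᵗ y₁² ≤ Δ K²` and the hypothesis gives
`F t ≤ A E exp (B Δ K²) < A E δ = K`. Since `F` is continuous, the first time at which `F`
reached `K` would contradict this, so `F < K` on all of `[s, s']`.
-/

open MeasureTheory intervalIntegral Set

theorem forall_lt_of_forall_Ico_lt {α β : Type*} [ConditionallyCompleteLinearOrder α]
    [TopologicalSpace α] [OrderTopology α] [LinearOrder β] [TopologicalSpace β]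
    [OrderClosedTopology β] {f : α → β} {a b : α} {K : β} (hf : ContinuousOn f (Icc a b))
    (hstep : ∀ t ∈ Icc a b, (∀ r ∈ Ico a t, f r < K) → f t < K) :
    ∀ t ∈ Icc a b, f t < K := by
  by_contra! ⟨t₁, ht₁, hKt₁⟩
  set T := Icc a b ∩ f ⁻¹' Ici K
  have hT : IsClosed T := hf.preimage_isClosed_of_isClosed isClosed_Icc isClosed_Ici
  have hbdd : BddBelow T := ⟨a, fun x hx => hx.1.1⟩
  obtain ⟨hmem, hKle⟩ := hT.csInf_mem ⟨t₁, ht₁, hKt₁⟩ hbdd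
  refine (hstep _ hmem fun r hr => ?_).not_ge hKle
  by_contra! hKr
  exact hr.2.not_ge (csInf_le hbdd ⟨⟨hr.1, hr.2.le.trans hmem.2⟩, hKr⟩)

theorem integral_sq_le_of_forall_Ioo {f : ℝ → ℝ} {a b K : ℝ} (hab : a ≤ b)
    (hf : IntervalIntegrable (fun x => f x ^ 2) volume a b)
    (hK : ∀ x ∈ Ioo a b, 0 ≤ f x ∧ f x ≤ K) :
    ∫ x in a..b, f x ^ 2 ≤ (b - a) * K ^ 2 := by
  calc ∫ x in a..b, f x ^ 2 ≤ ∫ _ in a..b, K ^ 2 :=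
        integral_mono_on_of_le_Ioo hab hf intervalIntegrable_const fun x hx =>
          pow_le_pow_left₀ (hK x hx).1 (hK x hx).2 2
    _ = (b - a) * K ^ 2 := by simp

theorem continuousOn_add_primitive {f g : ℝ → ℝ} {a b : ℝ} (hf : ContinuousOn f (Icc a b))
    (hg : IntervalIntegrable g volume a b) :
    ContinuousOn (fun t => f t + ∫ r in a..t, g r) (Icc a b) :=
  hf.add <| (continuousOn_primitive_interval' hg left_mem_uIcc).mono Icc_subset_uIcc

theorem local_in_time_continuation_general
    (s s' : ℝ)
    (y₁ y₂ : ℝ → ℝ)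
    (hy₁c : ContinuousOn y₁ (Icc s s'))
    (hy₁nn : ∀ t ∈ Icc s s', 0 ≤ y₁ t)
    (hy₂i : IntervalIntegrable y₂ volume s s')
    (hy₂nn : ∀ t ∈ Icc s s', 0 ≤ y₂ t)
    (A E B : ℝ) (hA : 0 ≤ A) (hE : 1 ≤ E) (hB : 0 ≤ B)
    (hmain : ∀ t ∈ Icc s s',
      y₁ t + ∫ r in s..t, y₂ r ≤
        A * E * Real.exp (B * ∫ r in s..t, (y₁ r) ^ 2))
    (δ : ℝ)
    (hcond : Real.exp (B * (s' - s) * δ ^ 2 * A ^ 2 * E ^ 2) < δ) :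
    ∀ t ∈ Icc s s', y₁ t + ∫ r in s..t, y₂ r ≤ δ * A * E := by
  rcases (mul_nonneg hA (zero_le_one.trans hE)).eq_or_lt with hAE | hAE
  · -- with `A E = 0` the hypothesis already gives `F ≤ 0`; the bootstrap below needs `K > 0`
    intro t ht
    simpa [mul_assoc, ← hAE] using hmain t ht
  have hprimitive_nonneg : ∀ t ∈ Icc s s', 0 ≤ ∫ r in s..t, y₂ r := fun t ht =>
    integral_nonneg ht.1 fun r hr => hy₂nn r ⟨hr.1, hr.2.trans ht.2⟩
  refine fun t₀ ht₀ => (forall_lt_of_forall_Ico_lt (continuousOn_add_primitive hy₁c hy₂i)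
    (fun t ht hlt => ?_) t₀ ht₀).le
  have hy₁_bound : ∀ r ∈ Ioo s t, 0 ≤ y₁ r ∧ y₁ r ≤ δ * A * E := fun r hr =>
    have hr' : r ∈ Icc s s' := ⟨hr.1.le, hr.2.le.trans ht.2⟩
    ⟨hy₁nn r hr', (le_add_of_nonneg_right (hprimitive_nonneg r hr')).trans
      (hlt r (Ioo_subset_Ico_self hr)).le⟩
  have hsq : ∫ r in s..t, y₁ r ^ 2 ≤ (s' - s) * (δ * A * E) ^ 2 := by
    have hy₁sq : IntervalIntegrable (fun r => y₁ r ^ 2) volume s t :=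
      ((hy₁c.mono (Icc_subset_Icc_right ht.2)).pow 2).intervalIntegrable_of_Icc ht.1
    refine (integral_sq_le_of_forall_Ioo ht.1 hy₁sq hy₁_bound).trans ?_
    gcongr
    exact ht.2
  calc y₁ t + ∫ r in s..t, y₂ r ≤ A * E * Real.exp (B * ∫ r in s..t, y₁ r ^ 2) := hmain t ht
    _ ≤ A * E * Real.exp (B * ((s' - s) * (δ * A * E) ^ 2)) := by gcongr
    _ < A * E * δ := by
      gcongr
      exact (congrArg Real.exp (by ring)).trans_lt hcond
    _ = δ * A * E := by ring

/-- Local-in-time continuation lemma (analytic core of Section 3.2 / Theorem 3.5). -/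
theorem local_in_time_continuation
    (s s' : ℝ) (hss' : s < s')
    (y₁ y₂ : ℝ → ℝ)
    (hy₁c : ContinuousOn y₁ (Icc s s'))
    (hy₁nn : ∀ t ∈ Icc s s', 0 ≤ y₁ t)
    (hy₂i : IntervalIntegrable y₂ volume s s')
    (hy₂nn : ∀ t ∈ Icc s s', 0 ≤ y₂ t)
    (A E B : ℝ) (hA : 0 ≤ A) (hE : 1 ≤ E) (hB : 0 ≤ B)
    (hmain : ∀ t ∈ Icc s s',
      y₁ t + ∫ r in s..t, y₂ r ≤
        A * E * Real.exp (B * ∫ r in s..t, (y₁ r) ^ 2))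
    (δ : ℝ) (hδ : 1 < δ)
    (hcond : Real.exp (B * (s' - s) * δ ^ 2 * A ^ 2 * E ^ 2) < δ) :
    ∀ t ∈ Icc s s', y₁ t + ∫ r in s..t, y₂ r ≤ δ * A * E :=
  local_in_time_continuation_general s s' y₁ y₂ hy₁c hy₁nn hy₂i hy₂nn A E B hA hE hB hmain δ hcond
end

section
/- Global stability via iterated local-in-time continuation (abstract form of Theorem 3.5): Let 0 = t₀ < t₁ < ⋯ < t_N = T be a partition of [0,T] with step sizes Δₙ := t_{n+1} − tₙ. Let y₁ : [0,T] → ℝ be continuous and nonnegative, let y₂ : [0,T] → ℝ be integrable and nonnegative, and let B ≥ 0. For each n ∈ {0,…,N−1} let rₙ ≥ 0, Eₙ ≥ 1 and δₙ > 1 be real numbers, define recursively A₀ := y₁(0) + r₀, Ψₙ := δₙ·Aₙ·Eₙ, and A_{n+1} := Ψₙ + r_{n+1}, and assume: (i) for all t ∈ [tₙ, t_{n+1}], y₁(t) + ∫_{tₙ}^{t} y₂(r) dr ≤ (y₁(tₙ) + rₙ)·Eₙ·exp(B·∫_{tₙ}^{t} y₁(r)² dr); and (ii) exp(B·Δₙ·δₙ²·Aₙ²·Eₙ²)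 < δₙ. Then for all t ∈ [0,T] one has y₁(t) + ∫₀^{t} y₂(r) dr ≤ Ψ_{N−1}. -/
/-!
On a step `[tₙ, tₙ₊₁]` one argues by continuity: as long as `y₁ ≤ Ψₙ` on `[tₙ, s]`, the exponent
`B ∫ y₁²` is at most `B Δₙ Ψₙ²`, so by the root condition (ii) the local estimate (i) gives
`y₁ s + ∫₀ˢ y₂ ≤ Aₙ Eₙ exp(B ∫ y₁²) < δₙ Aₙ Eₙ = Ψₙ`; hence the level `Ψₙ` is never reached.
At `tₙ₊₁` this bound plus `rₙ₊₁` is at most `Aₙ₊₁`, which starts the next step, and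
`Ψₙ ≤ Aₙ₊₁ ≤ Ψₙ₊₁`, so the last level `Ψ_{N-1}` bounds everything.
-/

open MeasureTheory intervalIntegral Set
open scoped Topology Interval

theorem ContinuousOn.forall_le_of_bootstrap {α β : Type*} [ConditionallyCompleteLinearOrder α]
    [TopologicalSpace α] [OrderTopology α] [DenselyOrdered α] [LinearOrder β] [TopologicalSpace β]
    [OrderClosedTopology β] {g : α → β} {a b : α} {K : β} (hg : ContinuousOn g (Icc a b))
    (ha : g a ≤ K) (H : ∀ s ∈ Icc a b, (∀ u ∈ Icc a s, g u ≤ K) → g s < K) :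
    ∀ s ∈ Icc a b, g s ≤ K := by
  have hclosed : IsClosed (g ⁻¹' Iic K ∩ Icc a b) := by
    rw [inter_comm]
    exact hg.preimage_isClosed_of_isClosed isClosed_Icc isClosed_Iic
  refine fun s hs ↦ hclosed.Icc_subset_of_forall_mem_nhdsGT_of_Icc_subset ha
    (fun x hx hle ↦ ?_) hs
  have hlt : g ⁻¹' Iio K ∈ 𝓝[Icc a b] x :=
    hg x (Ico_subset_Icc_self hx) (isOpen_Iio.mem_nhds (H x (Ico_subset_Icc_self hx) hle))
  exact Filter.mem_of_superset (nhdsWithin_le_of_mem (Icc_mem_nhdsGT_of_mem hx) hlt)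
    fun _ hu ↦ le_of_lt hu

theorem add_le_mul_mul_of_le_mul_mul {Y c I A E X : ℝ} (hE : 1 ≤ E) (hX : 1 ≤ X) (hI : 0 ≤ I)
    (hA : c + I ≤ A) (hY : Y ≤ c * E * X) : I + Y ≤ A * E * X := by
  nlinarith [mul_le_mul hE hX zero_le_one (by linarith)]

theorem le_mul_mul_of_one_le {A δ E : ℝ} (hA : 0 ≤ A) (hδ : 1 ≤ δ) (hE : 1 ≤ E) :
    A ≤ δ * A * E :=
  (le_mul_of_one_le_left hA hδ).trans (le_mul_of_one_le_right (by positivity) hE)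

theorem integral_sq_le_of_le {f : ℝ → ℝ} {a b K : ℝ} (hab : a ≤ b)
    (h0 : ∀ u ∈ Icc a b, 0 ≤ f u) (hK : ∀ u ∈ Icc a b, f u ≤ K) :
    ∫ u in a..b, f u ^ 2 ≤ (b - a) * K ^ 2 := by
  have hbound : ∀ u ∈ Ι a b, ‖f u ^ 2‖ ≤ K ^ 2 := by
    intro u hu
    rw [uIoc_of_le hab] at hu
    have hu' : u ∈ Icc a b := Ioc_subset_Icc_self hu
    rw [Real.norm_eq_abs, abs_of_nonneg (sq_nonneg _)]
    exact pow_le_pow_left₀ (h0 u hu') (hK u hu') 2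
  calc ∫ u in a..b, f u ^ 2 ≤ ‖∫ u in a..b, f u ^ 2‖ := Real.le_norm_self _
    _ ≤ K ^ 2 * |b - a| := norm_integral_le_of_norm_le_const hbound
    _ = (b - a) * K ^ 2 := by rw [abs_of_nonneg (sub_nonneg.2 hab), mul_comm]

theorem le_of_local_exp_estimate {y₁ y₂ : ℝ → ℝ} {a b B r E δ I A : ℝ} (hab : a ≤ b)
    (hy₁c : ContinuousOn y₁ (Icc a b)) (hy₁nn : ∀ s ∈ Icc a b, 0 ≤ y₁ s)
    (hy₂nn : ∀ s ∈ Icc a b, 0 ≤ y₂ s) (hB : 0 ≤ B) (hr : 0 ≤ r) (hE : 1 ≤ E) (hI : 0 ≤ I)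
    (hA : y₁ a + r + I ≤ A)
    (hlocal : ∀ s ∈ Icc a b, y₁ s + ∫ u in a..s, y₂ u ≤
      (y₁ a + r) * E * Real.exp (B * ∫ u in a..s, y₁ u ^ 2))
    (hroot : Real.exp (B * (b - a) * δ ^ 2 * A ^ 2 * E ^ 2) < δ) :
    ∀ s ∈ Icc a b, I + (y₁ s + ∫ u in a..s, y₂ u) ≤ δ * A * E := by
  set X : ℝ → ℝ := fun s ↦ Real.exp (B * ∫ u in a..s, y₁ u ^ 2)
  have hA₀ : 0 ≤ A := by linarith [hy₁nn a (left_mem_Icc.2 hab)]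
  have hδ : 1 ≤ δ := (Real.one_le_exp (by have := sub_nonneg.2 hab; positivity)).trans hroot.le
  have hmain : ∀ s ∈ Icc a b, I + (y₁ s + ∫ u in a..s, y₂ u) ≤ A * E * X s := fun s hs ↦
    add_le_mul_mul_of_le_mul_mul hE (Real.one_le_exp (mul_nonneg hB
      (intervalIntegral.integral_nonneg hs.1 fun _ _ ↦ sq_nonneg _))) hI hA (hlocal s hs)
  have hy₁le : ∀ s ∈ Icc a b, y₁ s ≤ I + (y₁ s + ∫ u in a..s, y₂ u) := fun s hs ↦ by
    have : 0 ≤ ∫ u in a..s, y₂ u :=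
      intervalIntegral.integral_nonneg hs.1 fun u hu ↦ hy₂nn u ⟨hu.1, hu.2.trans hs.2⟩
    linarith
  have hexp : ∀ s ∈ Icc a b, (∀ u ∈ Icc a s, y₁ u ≤ δ * A * E) → X s < δ := by
    intro s hs hle
    have hint := integral_sq_le_of_le hs.1 (fun u hu ↦ hy₁nn u ⟨hu.1, hu.2.trans hs.2⟩) hle
    calc X s ≤ Real.exp (B * ((b - a) * (δ * A * E) ^ 2)) :=
          Real.exp_le_exp.2 (mul_le_mul_of_nonneg_left (hint.trans (by gcongr; exact hs.2)) hB)
      _ = Real.exp (B * (b - a) * δ ^ 2 * A ^ 2 * E ^ 2) := by ring_nf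
      _ < δ := hroot
  have hbound : ∀ s ∈ Icc a b, y₁ s ≤ δ * A * E := by
    rcases hA₀.eq_or_lt with hA0 | hApos
    -- for `A = 0` the level `δ A E = 0` is attained, so the strict bootstrap cannot be used
    · intro s hs
      simpa [← hA0] using (hy₁le s hs).trans (hmain s hs)
    refine hy₁c.forall_le_of_bootstrap
      ((by linarith : y₁ a ≤ A).trans (le_mul_mul_of_one_le hA₀ hδ hE)) fun s hs hle ↦ ?_
    calc y₁ s ≤ A * E * X s := (hy₁le s hs).trans (hmain s hs)
      _ < A * E * δ := by gcongr; exact hexp s hs hle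
      _ = δ * A * E := by ring
  intro s hs
  calc I + (y₁ s + ∫ u in a..s, y₂ u) ≤ A * E * X s := hmain s hs
    _ ≤ A * E * δ := by
        gcongr
        exact (hexp s hs fun u hu ↦ hbound u ⟨hu.1, hu.2.trans hs.2⟩).le
    _ = δ * A * E := by ring

theorem add_integral_le_of_local_exp_estimate {y₁ y₂ : ℝ → ℝ} {c d a b B r E δ A : ℝ}
    (hca : c ≤ a) (hab : a ≤ b) (hbd : b ≤ d) (hy₁c : ContinuousOn y₁ (Icc c d))
    (hy₁nn : ∀ s ∈ Icc c d, 0 ≤ y₁ s) (hy₂i : IntervalIntegrable y₂ volume c d)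
    (hy₂nn : ∀ s ∈ Icc c d, 0 ≤ y₂ s) (hB : 0 ≤ B) (hr : 0 ≤ r) (hE : 1 ≤ E)
    (hA : y₁ a + r + ∫ u in c..a, y₂ u ≤ A)
    (hlocal : ∀ s ∈ Icc a b, y₁ s + ∫ u in a..s, y₂ u ≤
      (y₁ a + r) * E * Real.exp (B * ∫ u in a..s, y₁ u ^ 2))
    (hroot : Real.exp (B * (b - a) * δ ^ 2 * A ^ 2 * E ^ 2) < δ) :
    ∀ s ∈ Icc a b, y₁ s + ∫ u in c..s, y₂ u ≤ δ * A * E := by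
  intro s hs
  have hsub : Icc a b ⊆ Icc c d := Icc_subset_Icc hca hbd
  have hmem : ∀ x ∈ Icc a b, x ∈ [[c, d]] := fun x hx ↦
    mem_uIcc_of_le (hsub hx).1 (hsub hx).2
  have hsplit : ∫ u in c..s, y₂ u = (∫ u in c..a, y₂ u) + ∫ u in a..s, y₂ u :=
    (integral_add_adjacent_intervals
      (hy₂i.mono_set (uIcc_subset_uIcc_left (hmem a (left_mem_Icc.2 hab))))
      (hy₂i.mono_set (uIcc_subset_uIcc (hmem a (left_mem_Icc.2 hab)) (hmem s hs)))).symm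
  have hI : 0 ≤ ∫ u in c..a, y₂ u :=
    intervalIntegral.integral_nonneg hca fun u hu ↦ hy₂nn u ⟨hu.1, hu.2.trans (hab.trans hbd)⟩
  have := le_of_local_exp_estimate hab (hy₁c.mono hsub) (fun u hu ↦ hy₁nn u (hsub hu))
    (fun u hu ↦ hy₂nn u (hsub hu)) hB hr hE hI hA hlocal hroot s hs
  rw [hsplit]
  linarith

/-- Global stability via iterated local-in-time continuation
(abstract form of Theorem 3.5). -/
theorem global_stability_iterated_continuation
    (T : ℝ) (N : ℕ) (hN : 0 < N)
    (t : ℕ → ℝ) (ht0 : t 0 = 0) (htN : t N = T)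
    (htmono : ∀ n < N, t n < t (n + 1))
    (y₁ y₂ : ℝ → ℝ)
    (hy₁c : ContinuousOn y₁ (Icc 0 T))
    (hy₁nn : ∀ s ∈ Icc (0:ℝ) T, 0 ≤ y₁ s)
    (hy₂i : IntervalIntegrable y₂ volume 0 T)
    (hy₂nn : ∀ s ∈ Icc (0:ℝ) T, 0 ≤ y₂ s)
    (B : ℝ) (hB : 0 ≤ B)
    (r E δ : ℕ → ℝ)
    (hr : ∀ n < N, 0 ≤ r n) (hE : ∀ n < N, 1 ≤ E n) (hδ : ∀ n < N, 1 < δ n)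
    (A Ψ : ℕ → ℝ)
    (hA0 : A 0 = y₁ 0 + r 0)
    (hΨ : ∀ n < N, Ψ n = δ n * A n * E n)
    (hArec : ∀ n, n + 1 < N → A (n + 1) = Ψ n + r (n + 1))
    (hlocal : ∀ n < N, ∀ s ∈ Icc (t n) (t (n + 1)),
      y₁ s + ∫ u in (t n)..s, y₂ u ≤
        (y₁ (t n) + r n) * E n * Real.exp (B * ∫ u in (t n)..s, (y₁ u) ^ 2))
    (hroot : ∀ n < N,
      Real.exp (B * (t (n + 1) - t n) * (δ n) ^ 2 * (A n) ^ 2 * (E n) ^ 2) < δ n) :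
    ∀ s ∈ Icc (0:ℝ) T, y₁ s + ∫ u in (0:ℝ)..s, y₂ u ≤ Ψ (N - 1) := by
  have ht : MonotoneOn t (Iic N) :=
    monotoneOn_of_le_add_one ordConnected_Iic fun n _ _ hn ↦ (htmono n hn).le
  have htT : ∀ n ≤ N, t n ∈ Icc 0 T := fun n hn ↦
    ⟨ht0 ▸ ht (Nat.zero_le N) hn (Nat.zero_le n), htN ▸ ht hn (le_refl N) hn⟩
  have hstep : ∀ n < N, y₁ (t n) + r n + ∫ u in (0:ℝ)..t n, y₂ u ≤ A n →
      ∀ s ∈ Icc (t n) (t (n + 1)), y₁ s + ∫ u in (0:ℝ)..s, y₂ u ≤ Ψ n := fun n hn hA ↦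
    hΨ n hn ▸ add_integral_le_of_local_exp_estimate (htT n hn.le).1 (htmono n hn).le
      (htT _ hn).2 hy₁c hy₁nn hy₂i hy₂nn hB (hr n hn) (hE n hn) hA (hlocal n hn) (hroot n hn)
  have hinv : ∀ n < N, ∀ s ∈ Icc 0 (t (n + 1)), y₁ s + ∫ u in (0:ℝ)..s, y₂ u ≤ Ψ n := by
    intro n
    induction n with
    | zero =>
      intro hN s hs
      exact hstep 0 hN (by simp [ht0, hA0]) s (ht0 ▸ hs)
    | succ n ih =>
      intro hn s hs
      have hprev := ih (by omega)
      have hAn : A (n + 1) = Ψ n + r (n + 1) := hArec n hn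
      have hend := hprev _ ⟨(htT _ hn.le).1, le_rfl⟩
      have hend_nonneg : 0 ≤ y₁ (t (n + 1)) + ∫ u in (0:ℝ)..t (n + 1), y₂ u :=
        add_nonneg (hy₁nn _ (htT _ hn.le)) (intervalIntegral.integral_nonneg
          (htT _ hn.le).1 fun u hu ↦ hy₂nn u ⟨hu.1, hu.2.trans (htT _ hn.le).2⟩)
      have hmono : Ψ n ≤ Ψ (n + 1) := calc
        Ψ n ≤ A (n + 1) := by linarith [hr (n + 1) hn]
        _ ≤ Ψ (n + 1) := hΨ (n + 1) hn ▸
          le_mul_mul_of_one_le (by linarith [hr (n + 1) hn]) (hδ _ hn).le (hE _ hn)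
      rcases le_total s (t (n + 1)) with h | h
      · exact (hprev s ⟨hs.1, h⟩).trans hmono
      · exact hstep (n + 1) hn (by linarith) s ⟨h, hs.2⟩
  intro s hs
  exact hinv (N - 1) (by omega) s (by rwa [Nat.sub_add_cancel hN, htN])
end
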